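/- arXiv:math/0007047 — 3 statements merged into one kernel-verified Lean document; each statement's English description precedes it below -/
import Mathlib

section
/- Let M ⊆ U be a complex submanifold on which f̃ has no critical points (for every y ∈ M, d_yf̃ does not vanish identically on T_yM), let N ⊆ U be a complex submanifold, and let x ∈ N. Assume that (M, N) satisfies Whitney's condition a) at x in the conormal formulation, and that d_x(f̃|_N) = 0. Let α(t) = (x(t), η_t) be a complex-analytic path defined on a neighborhood of 0 ∈ ℂ with α(0) = (x, η), η ≠ 0, and (x(t), η_t) ∈ T*_{f̃|_M} U for all t ≠ 0. Then either [η] ∈ π(E)_x, or η ∈ (T*_N U)_x. Consequently, if in addition π(E)_x ⊆ {[ζ] : ζ ∈ (T*_N U)_x, ζ ≠ 0}, then η vanishes on T_xN. -/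
open Filter Topology Metric

set_option maxHeartbeats 2000000
set_option synthInstance.maxHeartbeats 1000000

/-- The quotient topology on the projectivization of a topological vector space. -/
instance projectivizationTopology (K V : Type*) [DivisionRing K] [AddCommGroup V] [Module K V]
    [TopologicalSpace V] : TopologicalSpace (Projectivization K V) :=
  inferInstanceAs (TopologicalSpace (Quotient (projectivizationSetoid K V)))

/-- The tangent space `T_y M` of a subset `M ⊆ ℂ^{n+1}` at a point `y`: the complex span of
the tangent cone.  For a complex submanifold this is the usual tangent space. -/
noncomputable def Tsp (n : ℕ) (M : Set (Fin (n + 1) → ℂ)) (y : Fin (n + 1) → ℂ) :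
    Submodule ℂ (Fin (n + 1) → ℂ) :=
  Submodule.span ℂ (tangentConeAt ℂ M y)

/-- `M` is a complex submanifold of the open set `U ⊆ ℂ^{n+1}`: `M ⊆ U`, and near each of
its points `M` can be holomorphically straightened onto a linear subspace. -/
def IsCxSubmanifold (n : ℕ) (U M : Set (Fin (n + 1) → ℂ)) : Prop :=
  M ⊆ U ∧
    ∀ x ∈ M,
      ∃ (V : Set (Fin (n + 1) → ℂ)) (ψ ψi : (Fin (n + 1) → ℂ) → Fin (n + 1) → ℂ)
        (W : Submodule ℂ (Fin (n + 1) → ℂ)),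
        IsOpen V ∧ x ∈ V ∧ V ⊆ U ∧ AnalyticOnNhd ℂ ψ V ∧ IsOpen (ψ '' V) ∧
          AnalyticOnNhd ℂ ψi (ψ '' V) ∧ (∀ y ∈ V, ψi (ψ y) = y) ∧
          ∀ y ∈ V, y ∈ M ↔ ψ y ∈ (W : Set (Fin (n + 1) → ℂ))

/-- The conormal space `T*_M U ⊆ U × Hom(ℂ^{n+1}, ℂ)`. -/
def conormalSet (n : ℕ) (M : Set (Fin (n + 1) → ℂ)) :
    Set ((Fin (n + 1) → ℂ) × ((Fin (n + 1) → ℂ) →L[ℂ] ℂ)) :=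
  {p | p.1 ∈ M ∧ ∀ v ∈ Tsp n M p.1, p.2 v = 0}

/-- The relative conormal space `T*_{f|_M} U`: covectors vanishing on `T_y M ∩ ker d_y f`. -/
def relConormalSet (n : ℕ) (f : (Fin (n + 1) → ℂ) → ℂ) (M : Set (Fin (n + 1) → ℂ)) :
    Set ((Fin (n + 1) → ℂ) × ((Fin (n + 1) → ℂ) →L[ℂ] ℂ)) :=
  {p | p.1 ∈ M ∧ ∀ v ∈ Tsp n M p.1, fderiv ℂ f p.1 v = 0 → p.2 v = 0}

/-- Thom's `a_f` condition for the pair `(M, N)` at `x ∈ N`: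
`(closure T*_{f|_M} U)_x ⊆ (T*_N U)_x`. -/
def ThomAf (n : ℕ) (f : (Fin (n + 1) → ℂ) → ℂ) (M N : Set (Fin (n + 1) → ℂ))
    (x : Fin (n + 1) → ℂ) : Prop :=
  ∀ η : (Fin (n + 1) → ℂ) →L[ℂ] ℂ, (x, η) ∈ closure (relConormalSet n f M) →
    ∀ v ∈ Tsp n N x, η v = 0

/-- Whitney's condition a) for the pair `(M, N)` at `x ∈ N` (conormal formulation). -/
def WhitneyA (n : ℕ) (M N : Set (Fin (n + 1) → ℂ)) (x : Fin (n + 1) → ℂ) : Prop :=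
  ∀ η : (Fin (n + 1) → ℂ) →L[ℂ] ℂ, (x, η) ∈ closure (conormalSet n M) →
    ∀ v ∈ Tsp n N x, η v = 0

/-- Whitney's condition b) for the pair `(M, N)` at `x ∈ N` (conormal formulation with
sequences). -/
def WhitneyB (n : ℕ) (M N : Set (Fin (n + 1) → ℂ)) (x : Fin (n + 1) → ℂ) : Prop :=
  ∀ (xs ys : ℕ → Fin (n + 1) → ℂ) (ηs : ℕ → ((Fin (n + 1) → ℂ) →L[ℂ] ℂ))
    (η : (Fin (n + 1) → ℂ) →L[ℂ] ℂ) (v : Fin (n + 1) → ℂ) (hv : v ≠ 0),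
    (∀ k, xs k ∈ M) → (∀ k, ys k ∈ N) →
    ∀ hne : ∀ k, xs k ≠ ys k,
    Tendsto xs atTop (𝓝 x) → Tendsto ys atTop (𝓝 x) →
    (∀ k, (xs k, ηs k) ∈ conormalSet n M) → Tendsto ηs atTop (𝓝 η) →
    Tendsto (fun k => Projectivization.mk ℂ (xs k - ys k) (sub_ne_zero_of_ne (hne k))) atTop
      (𝓝 (Projectivization.mk ℂ v hv)) →
    η v = 0

/-- The fibre over `x` of the projected exceptional divisor of the blow-up of the closure of
`T*_M U` along the image of `df̃` (set-theoretic description by sequences). -/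
def piE (n : ℕ) (f : (Fin (n + 1) → ℂ) → ℂ) (M : Set (Fin (n + 1) → ℂ))
    (x : Fin (n + 1) → ℂ) : Set (Projectivization ℂ ((Fin (n + 1) → ℂ) →L[ℂ] ℂ)) :=
  {q | ∃ (y : ℕ → Fin (n + 1) → ℂ) (w : ℕ → ((Fin (n + 1) → ℂ) →L[ℂ] ℂ))
      (_ : ∀ k, (y k, w k) ∈ conormalSet n M) (hne : ∀ k, w k ≠ fderiv ℂ f (y k)),
      Tendsto y atTop (𝓝 x) ∧ Tendsto w atTop (𝓝 (fderiv ℂ f x)) ∧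
      Tendsto (fun k => Projectivization.mk ℂ (w k - fderiv ℂ f (y k))
        (sub_ne_zero_of_ne (hne k))) atTop (𝓝 q)}

/-- `X` is a closed complex-analytic subset of the open set `U`: `X ⊆ U`, `X` is closed in
`U`, and locally `X` is the common zero set of finitely many holomorphic functions. -/
def IsClosedAnalyticIn (n : ℕ) (U X : Set (Fin (n + 1) → ℂ)) : Prop :=
  X ⊆ U ∧ (∀ x ∈ U, x ∈ closure X → x ∈ X) ∧
    ∀ x ∈ U, ∃ V : Set (Fin (n + 1) → ℂ), IsOpen V ∧ x ∈ V ∧ V ⊆ U ∧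
      ∃ (k : ℕ) (g : Fin k → (Fin (n + 1) → ℂ) → ℂ),
        (∀ i, AnalyticOnNhd ℂ (g i) V) ∧ X ∩ V = {y ∈ V | ∀ i, g i y = 0}

/-- The regular locus `X_reg` of `X ⊆ U`: points of `X` near which `X` is a complex
submanifold. -/
def regLocus (n : ℕ) (U X : Set (Fin (n + 1) → ℂ)) : Set (Fin (n + 1) → ℂ) :=
  {x | x ∈ X ∧ ∃ V : Set (Fin (n + 1) → ℂ), IsOpen V ∧ x ∈ V ∧ V ⊆ U ∧
    IsCxSubmanifold n V (X ∩ V)}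


lemma exists_lam_aux (n : ℕ) (T : Submodule ℂ (Fin (n + 1) → ℂ))
    (d θ' : (Fin (n + 1) → ℂ) →L[ℂ] ℂ)
    (h : ∃ v ∈ T, d v ≠ 0) (hrel : ∀ u ∈ T, d u = 0 → θ' u = 0) :
    ∃ c : ℂ, ∀ u ∈ T, θ' u = c * d u := by
  obtain ⟨v, hvT, hdv⟩ := h
  refine ⟨θ' v / d v, fun u huT => ?_⟩
  have h1 : u - (d u / d v) • v ∈ T := T.sub_mem huT (T.smul_mem _ hvT)
  have h2 : d (u - (d u / d v) • v) = 0 := by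
    simp only [map_sub, map_smul, smul_eq_mul]
    field_simp
    ring
  have h3 := hrel _ h1 h2
  simp only [map_sub, map_smul, smul_eq_mul, sub_eq_zero] at h3
  rw [h3]; ring

lemma tendsto_projmk_aux {V : Type*} [AddCommGroup V] [Module ℂ V] [TopologicalSpace V]
    (u : ℕ → V) (hu : ∀ k, u k ≠ 0) (w : V) (hw : w ≠ 0) (h : Tendsto u atTop (𝓝 w)) :
    Tendsto (fun k => Projectivization.mk ℂ (u k) (hu k)) atTop
      (𝓝 (Projectivization.mk ℂ w hw)) := by
  have hsub : Tendsto (fun k => (⟨u k, hu k⟩ : {v : V // v ≠ 0})) atTop (𝓝 ⟨w, hw⟩) := by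
    rw [tendsto_subtype_rng]; exact h
  exact ((continuous_quotient_mk').tendsto _).comp hsub

/-- let `M ⊆ U` be a complex submanifold on which `f̃` has no critical
points, `N ⊆ U` a complex submanifold, `x ∈ N`, with `(M, N)` satisfying Whitney's condition
a) at `x` and `d_x(f̃|_N) = 0`. For a complex-analytic path `α(t) = (x(t), η_t)` with
`α(0) = (x, η)`, `η ≠ 0`, lying in `T*_{f̃|_M} U` for `t ≠ 0`, either `[η] ∈ π(E)_x` or
`η ∈ (T*_N U)_x`; consequently, if moreover `π(E)_x ⊆ ℙ((T*_N U)_x)` then `η` vanishes on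
`T_x N`. -/
theorem path_dichotomy_piE_or_conormal (n : ℕ) (U : Set (Fin (n + 1) → ℂ)) (hU : IsOpen U)
    (f : (Fin (n + 1) → ℂ) → ℂ) (hf : AnalyticOnNhd ℂ f U)
    (M N : Set (Fin (n + 1) → ℂ)) (hM : IsCxSubmanifold n U M) (hN : IsCxSubmanifold n U N)
    (hcrit : ∀ y ∈ M, ∃ v ∈ Tsp n M y, fderiv ℂ f y v ≠ 0)
    (x : Fin (n + 1) → ℂ) (hx : x ∈ N)
    (ha : WhitneyA n M N x)
    (hdfN : ∀ v ∈ Tsp n N x, fderiv ℂ f x v = 0)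
    (γ : ℂ → Fin (n + 1) → ℂ) (θ : ℂ → ((Fin (n + 1) → ℂ) →L[ℂ] ℂ))
    (ε : ℝ) (hε : 0 < ε)
    (hγ : AnalyticOnNhd ℂ γ (ball (0 : ℂ) ε)) (hθ : AnalyticOnNhd ℂ θ (ball (0 : ℂ) ε))
    (η : (Fin (n + 1) → ℂ) →L[ℂ] ℂ) (hη : η ≠ 0)
    (hγ0 : γ 0 = x) (hθ0 : θ 0 = η)
    (hpath : ∀ t ∈ ball (0 : ℂ) ε, t ≠ 0 → (γ t, θ t) ∈ relConormalSet n f M) :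
    (Projectivization.mk ℂ η hη ∈ piE n f M x ∨ ∀ v ∈ Tsp n N x, η v = 0) ∧
      ((piE n f M x ⊆
          {q | ∃ (ζ : (Fin (n + 1) → ℂ) →L[ℂ] ℂ) (hζ : ζ ≠ 0),
            q = Projectivization.mk ℂ ζ hζ ∧ ∀ v ∈ Tsp n N x, ζ v = 0}) →
        ∀ v ∈ Tsp n N x, η v = 0) := by
  have hxU : x ∈ U := hN.1 hx
  have hγc : ContinuousAt γ 0 := (hγ 0 (mem_ball_self hε)).continuousAt
  have hθc : ContinuousAt θ 0 := (hθ 0 (mem_ball_self hε)).continuousAt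
  have hdfc : ContinuousAt (fderiv ℂ f) x := (hf.fderiv x hxU).continuousAt
  have hθ0ne : θ 0 ≠ 0 := by rw [hθ0]; exact hη
  have hne0 : ∀ᶠ t in 𝓝 (0 : ℂ), θ t ≠ 0 := hθc.eventually_ne hθ0ne
  obtain ⟨δ₀, hδ₀pos, hδ₀⟩ := Metric.eventually_nhds_iff.mp hne0
  set r : ℝ := min (ε / 2) (δ₀ / 2) with hr_def
  have hrpos : 0 < r := lt_min (by linarith) (by linarith)
  set t : ℕ → ℂ := fun k => ((r / (k + 1) : ℝ) : ℂ) with ht_def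
  have htne : ∀ k, t k ≠ 0 := by
    intro k
    have h : (r / (k + 1) : ℝ) ≠ 0 := by positivity
    simp only [ht_def, ne_eq, Complex.ofReal_eq_zero]
    exact h
  have htnorm : ∀ k, ‖t k‖ = r / (k + 1) := by
    intro k
    have h1 : (0 : ℝ) ≤ r / (k + 1) := by positivity
    rw [show t k = ((r / (k + 1) : ℝ) : ℂ) from rfl, Complex.norm_real, Real.norm_of_nonneg h1]
  have htler : ∀ k, ‖t k‖ ≤ r := by
    intro k
    rw [htnorm]
    apply div_le_self hrpos.le
    have : (0 : ℝ) ≤ (k : ℝ) := Nat.cast_nonneg k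
    linarith
  have htball : ∀ k, t k ∈ ball (0 : ℂ) ε := by
    intro k
    rw [mem_ball, dist_zero_right]
    exact lt_of_le_of_lt (htler k) (lt_of_le_of_lt (min_le_left _ _) (by linarith))
  have htδ : ∀ k, dist (t k) 0 < δ₀ := by
    intro k
    rw [dist_zero_right]
    exact lt_of_le_of_lt (htler k) (lt_of_le_of_lt (min_le_right _ _) (by linarith))
  have htlim : Tendsto t atTop (𝓝 (0 : ℂ)) := by
    have h1 : Tendsto (fun k : ℕ => r / ((k : ℝ) + 1)) atTop (𝓝 0) := by
      have h0 := (tendsto_const_div_atTop_nhds_zero_nat r).comp (tendsto_add_atTop_nat 1)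
      refine h0.congr fun k => ?_
      simp only [Function.comp]
      push_cast
      ring
    have h2 := (Complex.continuous_ofReal.tendsto 0).comp h1
    have h3 : Tendsto t atTop (𝓝 ((0 : ℝ) : ℂ)) := h2
    simpa using h3
  set y : ℕ → Fin (n + 1) → ℂ := fun k => γ (t k) with hy_def
  set Θ : ℕ → ((Fin (n + 1) → ℂ) →L[ℂ] ℂ) := fun k => θ (t k) with hΘ_def
  have hrel : ∀ k, (y k, Θ k) ∈ relConormalSet n f M := fun k =>
    hpath _ (htball k) (htne k)
  have hyM : ∀ k, y k ∈ M := fun k => (hrel k).1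
  have hyx : Tendsto y atTop (𝓝 x) := by
    have := hγc.tendsto.comp htlim
    rwa [hγ0] at this
  have hΘη : Tendsto Θ atTop (𝓝 η) := by
    have := hθc.tendsto.comp htlim
    rwa [hθ0] at this
  have hΘne : ∀ k, Θ k ≠ 0 := fun k => hδ₀ (htδ k)
  have hdfy : Tendsto (fun k => fderiv ℂ f (y k)) atTop (𝓝 (fderiv ℂ f x)) :=
    hdfc.tendsto.comp hyx
  have hlamE : ∀ k, ∃ c : ℂ, ∀ u ∈ Tsp n M (y k), Θ k u = c * fderiv ℂ f (y k) u :=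
    fun k => exists_lam_aux n (Tsp n M (y k)) (fderiv ℂ f (y k)) (Θ k)
      (hcrit _ (hyM k)) (hrel k).2
  choose lam hlam using hlamE
  -- Claim A : a convergent subsequence of lam yields the conormal conclusion
  have keyA : ∀ φ : ℕ → ℕ, StrictMono φ → ∀ c₀ : ℂ, Tendsto (lam ∘ φ) atTop (𝓝 c₀) →
      ∀ v ∈ Tsp n N x, η v = 0 := by
    intro φ hφ c₀ hc v hv
    have hmem : ∀ j, (y (φ j), Θ (φ j) - lam (φ j) • fderiv ℂ f (y (φ j))) ∈
        conormalSet n M := by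
      intro j
      refine ⟨hyM _, fun u hu => ?_⟩
      have := hlam (φ j) u hu
      simp [ContinuousLinearMap.sub_apply, ContinuousLinearMap.smul_apply, smul_eq_mul, this]
    have hconv : Tendsto
        (fun j => (y (φ j), Θ (φ j) - lam (φ j) • fderiv ℂ f (y (φ j)))) atTop
        (𝓝 (x, η - c₀ • fderiv ℂ f x)) := by
      refine Tendsto.prodMk_nhds (hyx.comp hφ.tendsto_atTop) ?_
      exact (hΘη.comp hφ.tendsto_atTop).sub (hc.smul (hdfy.comp hφ.tendsto_atTop))
    have hcl : (x, η - c₀ • fderiv ℂ f x) ∈ closure (conormalSet n M) :=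
      mem_closure_of_tendsto hconv (Eventually.of_forall hmem)
    have h1 := ha _ hcl v hv
    have h2 := hdfN v hv
    simpa [ContinuousLinearMap.sub_apply, ContinuousLinearMap.smul_apply, h2] using h1
  have key : Projectivization.mk ℂ η hη ∈ piE n f M x ∨ ∀ v ∈ Tsp n N x, η v = 0 := by
    by_cases hB : Tendsto (fun k => ‖lam k‖) atTop atTop
    · left
      obtain ⟨K, hK⟩ := eventually_atTop.mp (hB.eventually_ge_atTop 1)
      set φ : ℕ → ℕ := fun j => j + K with hφ_def
      have hφmono : StrictMono φ := fun a b hab => by simp [hφ_def]; omega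
      have hlamne : ∀ j, lam (φ j) ≠ 0 := by
        intro j
        have h1 : (1 : ℝ) ≤ ‖lam (φ j)‖ := hK _ (by simp [hφ_def])
        intro h0
        rw [h0] at h1; simp at h1; linarith
      set w : ℕ → ((Fin (n + 1) → ℂ) →L[ℂ] ℂ) :=
        fun j => fderiv ℂ f (y (φ j)) - (lam (φ j))⁻¹ • Θ (φ j) with hw_def
      have hwmem : ∀ j, (y (φ j), w j) ∈ conormalSet n M := by
        intro j
        refine ⟨hyM _, fun u hu => ?_⟩
        have h1 := hlam (φ j) u hu
        have h2 : (lam (φ j))⁻¹ * Θ (φ j) u = fderiv ℂ f (y (φ j)) u := by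
          rw [h1, ← mul_assoc, inv_mul_cancel₀ (hlamne j), one_mul]
        simp [hw_def, ContinuousLinearMap.sub_apply, ContinuousLinearMap.smul_apply,
          smul_eq_mul, h2]
      have hwsub : ∀ j, w j - fderiv ℂ f (y (φ j)) = (-(lam (φ j))⁻¹) • Θ (φ j) := by
        intro j
        show fderiv ℂ f (y (φ j)) - (lam (φ j))⁻¹ • Θ (φ j) - fderiv ℂ f (y (φ j)) = _
        ext u
        simp only [ContinuousLinearMap.sub_apply, ContinuousLinearMap.smul_apply,
          smul_eq_mul]
        ring
      have hwne : ∀ j, w j ≠ fderiv ℂ f (y (φ j)) := by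
        intro j h0
        have h1 : (-(lam (φ j))⁻¹) • Θ (φ j) = 0 := by rw [← hwsub j, h0, sub_self]
        have hc : (-(lam (φ j))⁻¹) ≠ 0 := neg_ne_zero.mpr (inv_ne_zero (hlamne j))
        have h2 : Θ (φ j) = 0 := by
          ext u
          have h4 : ((-(lam (φ j))⁻¹) • Θ (φ j)) u = 0 := by rw [h1]; rfl
          rw [ContinuousLinearMap.smul_apply, smul_eq_mul] at h4
          simpa using (mul_eq_zero.mp h4).resolve_left hc
        exact hΘne (φ j) h2
      have hinv0 : Tendsto (fun j => (lam (φ j))⁻¹) atTop (𝓝 0) := by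
        rw [tendsto_zero_iff_norm_tendsto_zero]
        have h1 : Tendsto (fun j => ‖lam (φ j)‖) atTop atTop :=
          hB.comp hφmono.tendsto_atTop
        have h2 := tendsto_inv_atTop_zero.comp h1
        simpa [Function.comp_def, norm_inv] using h2
      have hwlim : Tendsto w atTop (𝓝 (fderiv ℂ f x)) := by
        have h1 : Tendsto (fun j => (lam (φ j))⁻¹ • Θ (φ j)) atTop
            (𝓝 ((0 : ℂ) • η)) := hinv0.smul (hΘη.comp hφmono.tendsto_atTop)
        have h2 := (hdfy.comp hφmono.tendsto_atTop).sub h1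
        have h0 : fderiv ℂ f x - (0 : ℂ) • η = fderiv ℂ f x := by
          ext u; simp
        rw [h0] at h2
        exact h2
      have hprojeq : ∀ j, Projectivization.mk ℂ (w j - fderiv ℂ f (y (φ j)))
          (sub_ne_zero_of_ne (hwne j)) = Projectivization.mk ℂ (Θ (φ j)) (hΘne (φ j)) := by
        intro j
        rw [Projectivization.mk_eq_mk_iff]
        exact ⟨Units.mk0 (-(lam (φ j))⁻¹) (by simp [hlamne j]), (hwsub j).symm⟩
      have hproj : Tendsto (fun j => Projectivization.mk ℂ
          (w j - fderiv ℂ f (y (φ j))) (sub_ne_zero_of_ne (hwne j))) atTop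
          (𝓝 (Projectivization.mk ℂ η hη)) := by
        have h1 : Tendsto (fun j => Projectivization.mk ℂ (Θ (φ j)) (hΘne (φ j))) atTop
            (𝓝 (Projectivization.mk ℂ η hη)) :=
          tendsto_projmk_aux _ _ _ _ (hΘη.comp hφmono.tendsto_atTop)
        convert h1 using 1
        funext j
        exact hprojeq j
      exact ⟨fun j => y (φ j), w, fun j => hwmem j, hwne,
        hyx.comp hφmono.tendsto_atTop, hwlim, hproj⟩
    · right
      have hC : ∃ C : ℝ, ∃ᶠ k in atTop, ‖lam k‖ < C := by
        by_contra hcon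
        push_neg at hcon
        apply hB
        rw [Filter.tendsto_atTop]
        intro b
        have := hcon b
        filter_upwards [this] with k hk
        simpa [not_lt] using hk
      obtain ⟨C, hCfreq⟩ := hC
      obtain ⟨φ, hφ, hφC⟩ := extraction_of_frequently_atTop hCfreq
      obtain ⟨c₀, _, ψ, hψ, hcc⟩ := (isCompact_closedBall (0 : ℂ) C).tendsto_subseq
        (x := fun j => lam (φ j)) (fun j => mem_closedBall_zero_iff.mpr (hφC j).le)
      exact keyA (φ ∘ ψ) (hφ.comp hψ) c₀ hcc
  refine ⟨key, fun hsub v hv => ?_⟩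
  rcases key with hL | hR
  · obtain ⟨ζ, hζ, heq, hvan⟩ := hsub hL
    rw [Projectivization.mk_eq_mk_iff] at heq
    obtain ⟨a, ha'⟩ := heq
    rw [← ha']
    simp [ContinuousLinearMap.smul_apply, hvan v hv]
  · exact hR v hv
end

section
/- Let M ⊆ U be a complex submanifold on which f̃ has no critical points (for every y ∈ M, d_yf̃ does not vanish identically on T_yM), and let x ∈ U. Let (x(t), η_t) be a path defined for t ≠ 0 in a punctured neighborhood of 0 with (x(t), η_t) ∈ T*_{f̃|_M} U for all t ≠ 0, converging as t → 0 to (x, η) with η ≠ 0. Write η_t = ω_t + λ(t)·d_{x(t)}f̃, where ω_t vanishes on T_{x(t)}M and λ(t) ∈ ℂ (this decomposition exists and is unique since f̃ has no critical points on M). If |λ(t)| → ∞ as t → 0, then [η] ∈ π(E)_x. -/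
open Filter Topology Metric

/-- Case 1 in the proof of Proposition 4.3: let `M ⊆ U` be a complex
submanifold on which `f̃` has no critical points, and let `(x(t), η_t) ∈ T*_{f̃|_M} U` for
`t ≠ 0` converge to `(x, η)` with `η ≠ 0` as `t → 0`.  Write `η_t = ω_t + λ(t)·d_{x(t)}f̃`
with `ω_t` vanishing on `T_{x(t)}M`.  If `|λ(t)| → ∞` as `t → 0`, then `[η] ∈ π(E)_x`. -/
theorem lambda_unbounded_implies_mem_piE (n : ℕ) (U : Set (Fin (n + 1) → ℂ)) (hU : IsOpen U)
    (f : (Fin (n + 1) → ℂ) → ℂ) (hf : AnalyticOnNhd ℂ f U)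
    (M : Set (Fin (n + 1) → ℂ)) (hM : IsCxSubmanifold n U M)
    (hcrit : ∀ y ∈ M, ∃ v ∈ Tsp n M y, fderiv ℂ f y v ≠ 0)
    (x : Fin (n + 1) → ℂ) (hx : x ∈ U)
    (γ : ℂ → Fin (n + 1) → ℂ) (θ ω : ℂ → ((Fin (n + 1) → ℂ) →L[ℂ] ℂ)) (lam : ℂ → ℂ)
    (ε : ℝ) (hε : 0 < ε)
    (hpath : ∀ t ∈ ball (0 : ℂ) ε, t ≠ 0 → (γ t, θ t) ∈ relConormalSet n f M)
    (η : (Fin (n + 1) → ℂ) →L[ℂ] ℂ) (hη : η ≠ 0)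
    (hγlim : Tendsto γ (𝓝[≠] (0 : ℂ)) (𝓝 x))
    (hθlim : Tendsto θ (𝓝[≠] (0 : ℂ)) (𝓝 η))
    (hdecomp : ∀ t ∈ ball (0 : ℂ) ε, t ≠ 0 →
      θ t = ω t + lam t • fderiv ℂ f (γ t) ∧ ∀ v ∈ Tsp n M (γ t), ω t v = 0)
    (hlam : Tendsto (fun t => ‖lam t‖) (𝓝[≠] (0 : ℂ)) atTop) :
    Projectivization.mk ℂ η hη ∈ piE n f M x := by
  set l := 𝓝[≠] (0 : ℂ) with hl
  -- eventual properties along the punctured filter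
  have hball : ∀ᶠ t in l, t ∈ ball (0 : ℂ) ε :=
    eventually_nhdsWithin_of_eventually_nhds
      (isOpen_ball.eventually_mem (mem_ball_self hε))
  have hne0 : ∀ᶠ t in l, t ≠ (0 : ℂ) := eventually_mem_nhdsWithin
  have hθne : ∀ᶠ t in l, θ t ≠ 0 := hθlim.eventually_ne hη
  have hlamne : ∀ᶠ t in l, lam t ≠ 0 := by
    filter_upwards [hlam.eventually_ge_atTop 1] with t ht
    intro h0
    rw [h0] at ht; simp at ht; linarith
  have hall : ∀ᶠ t in l, t ∈ ball (0 : ℂ) ε ∧ t ≠ 0 ∧ θ t ≠ 0 ∧ lam t ≠ 0 := by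
    filter_upwards [hball, hne0, hθne, hlamne] with t h1 h2 h3 h4
    exact ⟨h1, h2, h3, h4⟩
  -- choose a sequence tending to 0 within the punctured filter
  obtain ⟨t0, ht0⟩ := exists_seq_tendsto l
  obtain ⟨N, hN⟩ := eventually_atTop.mp (ht0.eventually hall)
  set s : ℕ → ℂ := fun k => t0 (k + N) with hs
  have hsl : Tendsto s atTop l := ht0.comp (tendsto_add_atTop_nat N)
  have hP : ∀ k, s k ∈ ball (0 : ℂ) ε ∧ s k ≠ 0 ∧ θ (s k) ≠ 0 ∧ lam (s k) ≠ 0 :=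
    fun k => hN _ (Nat.le_add_left N k)
  -- continuity of the derivative of f at x
  have hdfc : ContinuousAt (fderiv ℂ f) x := ((hf.fderiv) x hx).continuousAt
  have hdf : Tendsto (fun t => fderiv ℂ f (γ t)) l (𝓝 (fderiv ℂ f x)) :=
    hdfc.tendsto.comp hγlim
  have hinv : Tendsto (fun t => (lam t)⁻¹) l (𝓝 (0 : ℂ)) := by
    rw [tendsto_zero_iff_norm_tendsto_zero]
    exact (hlam.inv_tendsto_atTop).congr (fun t => (norm_inv (lam t)).symm)
  -- the sequences
  set y : ℕ → Fin (n + 1) → ℂ := fun k => γ (s k) with hy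
  set w : ℕ → ((Fin (n + 1) → ℂ) →L[ℂ] ℂ) :=
    fun k => fderiv ℂ f (γ (s k)) - (lam (s k))⁻¹ • θ (s k) with hw
  have hkey : ∀ k, w k - fderiv ℂ f (y k) = (-(lam (s k))⁻¹) • θ (s k) := by
    intro k
    simp only [hw, hy]
    rw [sub_sub_cancel_left]
    exact (neg_smul _ _).symm
  have hcon : ∀ k, (y k, w k) ∈ conormalSet n M := by
    intro k
    obtain ⟨hb, hne, hθ0, hl0⟩ := hP k
    obtain ⟨hdec, hω⟩ := hdecomp (s k) hb hne
    refine ⟨(hpath (s k) hb hne).1, ?_⟩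
    intro v hv
    have hωv : ω (s k) v = 0 := hω v hv
    have hθv : θ (s k) v = lam (s k) * fderiv ℂ f (γ (s k)) v := by
      rw [hdec]; simp [hωv]
    simp only [hw, ContinuousLinearMap.coe_sub', Pi.sub_apply,
      ContinuousLinearMap.coe_smul', Pi.smul_apply, smul_eq_mul, hθv]
    field_simp
    simp
  have hnez : ∀ k, w k - fderiv ℂ f (y k) ≠ 0 := by
    intro k
    rw [hkey k]
    exact smul_ne_zero (neg_ne_zero.mpr (inv_ne_zero (hP k).2.2.2)) (hP k).2.2.1
  have hne : ∀ k, w k ≠ fderiv ℂ f (y k) := fun k => sub_ne_zero.mp (hnez k)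
  refine ⟨y, w, hcon, hne, hγlim.comp hsl, ?_, ?_⟩
  · -- w k → fderiv f x
    have h := (hdf.comp hsl).sub (((hinv.comp hsl)).smul (hθlim.comp hsl))
    convert h using 2
    simp
    · rfl
    · exact (sub_eq_self.mpr (zero_smul ℂ η)).symm
  · -- projective convergence
    have hmk : ∀ k, Projectivization.mk ℂ (w k - fderiv ℂ f (y k)) (sub_ne_zero_of_ne (hne k))
        = Projectivization.mk ℂ (θ (s k)) (hP k).2.2.1 := by
      intro k
      rw [Projectivization.mk_eq_mk_iff]
      refine ⟨Units.mk0 (-(lam (s k))⁻¹)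
        (neg_ne_zero.mpr (inv_ne_zero (hP k).2.2.2)), ?_⟩
      rw [hkey k]
      rfl
    have hsub : Tendsto (fun k => (⟨θ (s k), (hP k).2.2.1⟩ :
        {v : (Fin (n + 1) → ℂ) →L[ℂ] ℂ // v ≠ 0})) atTop
        (𝓝 (⟨η, hη⟩ : {v : (Fin (n + 1) → ℂ) →L[ℂ] ℂ // v ≠ 0})) := by
      rw [tendsto_subtype_rng]
      exact hθlim.comp hsl
    have hq : Tendsto (fun k => Projectivization.mk ℂ (θ (s k)) (hP k).2.2.1) atTop
        (𝓝 (Projectivization.mk ℂ η hη)) :=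
      (continuous_quotient_mk'.tendsto _).comp hsub
    simpa only [hmk] using hq
end

section
/- Let M ⊆ U be a complex submanifold such that f̃ is not constant on any connected component of M, let Σ(f̃|_M) := {y ∈ M : d_yf̃ vanishes identically on T_yM} be the critical set of f̃|_M, and let M̊ := M ∖ Σ(f̃|_M). Then the closures of the two relative conormal spaces coincide: closure(T*_{f̃|_M̊} U) = closure(T*_{f̃|_M} U). Consequently, for any complex submanifold N ⊆ U on which the differential of f̃|_N vanishes identically and any x ∈ N, the pair (M, N) satisfies Thom's a_f condition at x if and only if the pair (M̊, N) does. -/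
open Filter Topology Metric

set_option synthInstance.maxHeartbeats 1000000
set_option maxHeartbeats 1000000

section Aux

abbrev Efd (n : ℕ) : Type := Fin (n + 1) → ℂ

variable {n : ℕ}

lemma tangentCone_subset_submodule {s : Set (Efd n)} {W : Submodule ℂ (Efd n)}
    {x : Efd n} (hs : s ⊆ (W : Set (Efd n))) (hx : x ∈ W) :
    tangentConeAt ℂ s x ⊆ (W : Set (Efd n)) := by
  intro v hv
  obtain ⟨c, d, hc, ds, hcd⟩ := mem_tangentConeAt_iff_exists_seq_norm_tendsto_atTop.mp hv
  have hW : IsClosed (W : Set (Efd n)) := Submodule.closed_of_finiteDimensional W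
  refine hW.mem_of_tendsto hcd ?_
  filter_upwards [ds] with k hk
  have hdk : d k ∈ W := by
    have h1 : (x + d k) - x ∈ W := W.sub_mem (hs hk) hx
    simpa using h1
  exact W.smul_mem _ hdk

/-- Chart data for a complex submanifold. -/
structure ChartData (n : ℕ) (U M : Set (Efd n)) where
  V : Set (Efd n)
  ψ : Efd n → Efd n
  ψi : Efd n → Efd n
  W : Submodule ℂ (Efd n)
  hV : IsOpen V
  hVU : V ⊆ U
  hψ : AnalyticOnNhd ℂ ψ V
  hψV : IsOpen (ψ '' V)
  hψi : AnalyticOnNhd ℂ ψi (ψ '' V)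
  hinv : ∀ y ∈ V, ψi (ψ y) = y
  hMW : ∀ y ∈ V, (y ∈ M ↔ ψ y ∈ (W : Set (Efd n)))

lemma IsCxSubmanifold.chart {U M : Set (Efd n)} (hM : IsCxSubmanifold n U M) {x : Efd n}
    (hx : x ∈ M) : ∃ C : ChartData n U M, x ∈ C.V := by
  obtain ⟨-, h⟩ := hM
  obtain ⟨V, ψ, ψi, W, h1, h2, h3, h4, h5, h6, h7, h8⟩ := h x hx
  exact ⟨⟨V, ψ, ψi, W, h1, h3, h4, h5, h6, h7, h8⟩, h2⟩

namespace ChartData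

variable {U M : Set (Efd n)} (C : ChartData n U M) {z p : Efd n}

lemma psi_mem (hz : z ∈ C.V) : C.ψ z ∈ C.ψ '' C.V := Set.mem_image_of_mem _ hz

lemma psi_psii (hp : p ∈ C.ψ '' C.V) : C.ψ (C.ψi p) = p := by
  obtain ⟨a, ha, rfl⟩ := hp; rw [C.hinv a ha]

lemma psii_mem (hp : p ∈ C.ψ '' C.V) : C.ψi p ∈ C.V := by
  obtain ⟨a, ha, rfl⟩ := hp; rw [C.hinv a ha]; exact ha

noncomputable def A (z : Efd n) : Efd n →L[ℂ] Efd n := fderiv ℂ C.ψ z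
noncomputable def B (z : Efd n) : Efd n →L[ℂ] Efd n := fderiv ℂ C.ψi (C.ψ z)

lemma diffψ (hz : z ∈ C.V) : DifferentiableAt ℂ C.ψ z := (C.hψ z hz).differentiableAt

lemma diffψi (hp : p ∈ C.ψ '' C.V) : DifferentiableAt ℂ C.ψi p :=
  (C.hψi p hp).differentiableAt

lemma B_comp_A (hz : z ∈ C.V) :
    (C.B z).comp (C.A z) = ContinuousLinearMap.id ℂ (Efd n) := by
  have h1 : fderiv ℂ (C.ψi ∘ C.ψ) z = (C.B z).comp (C.A z) :=
    fderiv_comp z (C.diffψi (C.psi_mem hz)) (C.diffψ hz)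
  have h2 : C.ψi ∘ C.ψ =ᶠ[𝓝 z] id := by
    filter_upwards [C.hV.mem_nhds hz] with a ha
    exact C.hinv a ha
  rw [← h1, h2.fderiv_eq, fderiv_id]

lemma BA_apply (hz : z ∈ C.V) (v : Efd n) : C.B z (C.A z v) = v := by
  have h := ContinuousLinearMap.ext_iff.mp (C.B_comp_A hz) v
  simpa using h

lemma AB_apply (hz : z ∈ C.V) (v : Efd n) : C.A z (C.B z v) = v := by
  have hinj : Function.Injective (C.A z) :=
    Function.LeftInverse.injective (g := C.B z) (C.BA_apply hz)
  have hsurj : Function.Surjective ((C.A z).toLinearMap) :=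
    LinearMap.injective_iff_surjective.mp hinj
  obtain ⟨u, rfl⟩ := hsurj v
  rw [A]
  exact congrArg _ (C.BA_apply hz u)

end ChartData


namespace ChartData

variable {n : ℕ} {U M : Set (Efd n)} (C : ChartData n U M) {z p : Efd n}

lemma mem_tangentCone (hzV : z ∈ C.V) (hzM : z ∈ M) {w : Efd n} (hw : w ∈ C.W) :
    C.B z w ∈ tangentConeAt ℂ M z := by
  have hψzW : C.ψ z ∈ C.W := (C.hMW z hzV).mp hzM
  have hd : HasFDerivAt C.ψi (C.B z) (C.ψ z) := (C.diffψi (C.psi_mem hzV)).hasFDerivAt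
  have hc : Tendsto (fun k : ℕ => ‖(k : ℂ)‖) atTop atTop := by
    simpa [Complex.norm_natCast] using tendsto_natCast_atTop_atTop (R := ℝ)
  refine mem_tangentConeAt_iff_exists_seq_norm_tendsto_atTop.mpr
    ⟨fun k : ℕ => (k : ℂ), fun k => C.ψi (C.ψ z + ((k : ℂ))⁻¹ • w) - z, hc, ?_, ?_⟩
  · have h0 : Tendsto (fun k : ℕ => ((k : ℂ))⁻¹ • w) atTop (𝓝 0) := by
      have hinv : Tendsto (fun k : ℕ => ((k : ℂ))⁻¹) atTop (𝓝 0) := by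
        rw [tendsto_zero_iff_norm_tendsto_zero]
        simp only [norm_inv, Complex.norm_natCast]
        exact tendsto_inv_atTop_zero.comp (tendsto_natCast_atTop_atTop (R := ℝ))
      simpa using hinv.smul_const w
    have hq : Tendsto (fun k : ℕ => C.ψ z + ((k : ℂ))⁻¹ • w) atTop (𝓝 (C.ψ z)) := by
      simpa using tendsto_const_nhds.add h0
    have hev : ∀ᶠ k : ℕ in atTop, C.ψ z + ((k : ℂ))⁻¹ • w ∈ C.ψ '' C.V :=
      hq.eventually (C.hψV.eventually_mem (C.psi_mem hzV))
    filter_upwards [hev] with k hk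
    have hqW : C.ψ z + ((k : ℂ))⁻¹ • w ∈ C.W := C.W.add_mem hψzW (C.W.smul_mem _ hw)
    have h1 : C.ψi (C.ψ z + ((k : ℂ))⁻¹ • w) ∈ C.V := C.psii_mem hk
    have h2 : C.ψ (C.ψi (C.ψ z + ((k : ℂ))⁻¹ • w)) = C.ψ z + ((k : ℂ))⁻¹ • w :=
      C.psi_psii hk
    have h3 : C.ψi (C.ψ z + ((k : ℂ))⁻¹ • w) ∈ M := (C.hMW _ h1).mpr (by rw [h2]; exact hqW)
    simpa using h3
  · have hlim := hd.lim w hc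
    simpa [C.hinv z hzV] using hlim

lemma B_mem_Tsp (hzV : z ∈ C.V) (hzM : z ∈ M) {w : Efd n} (hw : w ∈ C.W) :
    C.B z w ∈ Tsp n M z :=
  Submodule.subset_span (C.mem_tangentCone hzV hzM hw)

lemma tangentCone_subset (hzV : z ∈ C.V) (hzM : z ∈ M) :
    tangentConeAt ℂ M z ⊆ (C.B z) '' (C.W : Set (Efd n)) := by
  intro v hv
  have h1 : tangentConeAt ℂ M z = tangentConeAt ℂ (M ∩ C.V) z :=
    (tangentConeAt_inter_nhds (C.hV.mem_nhds hzV)).symm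
  have hψd : HasFDerivWithinAt C.ψ (C.A z) (M ∩ C.V) z :=
    (C.diffψ hzV).hasFDerivAt.hasFDerivWithinAt
  have h2 : C.A z v ∈ tangentConeAt ℂ (C.ψ '' (M ∩ C.V)) (C.ψ z) :=
    hψd.mapsTo_tangent_cone (by rw [← h1]; exact hv)
  have h3 : tangentConeAt ℂ (C.ψ '' (M ∩ C.V)) (C.ψ z) ⊆ (C.W : Set (Efd n)) := by
    refine tangentCone_subset_submodule ?_ ((C.hMW z hzV).mp hzM)
    rintro q ⟨a, ⟨haM, haV⟩, rfl⟩
    exact (C.hMW a haV).mp haM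
  exact ⟨C.A z v, h3 h2, C.BA_apply hzV v⟩

lemma exists_of_mem_Tsp (hzV : z ∈ C.V) (hzM : z ∈ M) {v : Efd n} (hv : v ∈ Tsp n M z) :
    ∃ w ∈ C.W, C.B z w = v := by
  have hle : Tsp n M z ≤ C.W.map ((C.B z) : Efd n →ₗ[ℂ] Efd n) := by
    rw [Tsp]
    refine Submodule.span_le.mpr ?_
    intro u hu
    obtain ⟨w, hw, rfl⟩ := C.tangentCone_subset hzV hzM hu
    exact Submodule.mem_map_of_mem hw
  have := hle hv
  simpa [Submodule.mem_map] using this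

lemma contA : ContinuousOn (fun z => C.A z) C.V := C.hψ.fderiv.continuousOn

lemma contB : ContinuousOn (fun z => C.B z) C.V :=
  (C.hψi.fderiv.continuousOn).comp C.hψ.continuousOn fun z hz => C.psi_mem hz

end ChartData

def critSet (n : ℕ) (f : Efd n → ℂ) (M : Set (Efd n)) : Set (Efd n) :=
  {y ∈ M | ∀ v ∈ Tsp n M y, fderiv ℂ f y v = 0}

variable {n : ℕ}

lemma smooth_locality {U M : Set (Efd n)} (hM : IsCxSubmanifold n U M) {f : Efd n → ℂ}
    (hf : AnalyticOnNhd ℂ f U) {y : Efd n} (hy : y ∈ M \ critSet n f M) :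
    ∃ T : Set (Efd n), IsOpen T ∧ y ∈ T ∧ M ∩ T ⊆ M \ critSet n f M := by
  obtain ⟨hyM, hyc⟩ := hy
  have hex : ∃ v ∈ Tsp n M y, fderiv ℂ f y v ≠ 0 := by
    by_contra h
    push_neg at h
    exact hyc ⟨hyM, h⟩
  obtain ⟨v, hv, hfv⟩ := hex
  obtain ⟨C, hyV⟩ := hM.chart hyM
  obtain ⟨w, hwW, hBw⟩ := C.exists_of_mem_Tsp hyV hyM hv
  have hdf : ContinuousOn (fun z => fderiv ℂ f z) C.V := hf.fderiv.continuousOn.mono C.hVU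
  have hBc : ContinuousOn (fun z => C.B z w) C.V := C.contB.clm_apply continuousOn_const
  have hg : ContinuousOn (fun z => fderiv ℂ f z (C.B z w)) C.V := hdf.clm_apply hBc
  refine ⟨C.V ∩ (fun z => fderiv ℂ f z (C.B z w)) ⁻¹' {0}ᶜ,
    hg.isOpen_inter_preimage C.hV isOpen_compl_singleton, ⟨hyV, ?_⟩, ?_⟩
  · simp only [Set.mem_preimage, Set.mem_compl_iff, Set.mem_singleton_iff]
    rw [hBw]; exact hfv
  · rintro z ⟨hzM, hzV, hz0⟩
    refine ⟨hzM, fun hzc => ?_⟩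
    exact hz0 (hzc.2 (C.B z w) (C.B_mem_Tsp hzV hzM hwW))

lemma tangentCone_smooth_eq {U M : Set (Efd n)} (hM : IsCxSubmanifold n U M) {f : Efd n → ℂ}
    (hf : AnalyticOnNhd ℂ f U) {y : Efd n} (hy : y ∈ M \ critSet n f M) :
    tangentConeAt ℂ (M \ critSet n f M) y = tangentConeAt ℂ M y := by
  obtain ⟨T, hT, hyT, hMT⟩ := smooth_locality hM hf hy
  have h1 : M ∩ T = (M \ critSet n f M) ∩ T := by
    apply Set.Subset.antisymm
    · intro z hz; exact ⟨hMT hz, hz.2⟩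
    · intro z hz; exact ⟨hz.1.1, hz.2⟩
  calc tangentConeAt ℂ (M \ critSet n f M) y
      = tangentConeAt ℂ ((M \ critSet n f M) ∩ T) y :=
        (tangentConeAt_inter_nhds (hT.mem_nhds hyT)).symm
    _ = tangentConeAt ℂ (M ∩ T) y := by rw [← h1]
    _ = tangentConeAt ℂ M y := tangentConeAt_inter_nhds (hT.mem_nhds hyT)

lemma Tsp_smooth_eq {U M : Set (Efd n)} (hM : IsCxSubmanifold n U M) {f : Efd n → ℂ}
    (hf : AnalyticOnNhd ℂ f U) {y : Efd n} (hy : y ∈ M \ critSet n f M) :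
    Tsp n (M \ critSet n f M) y = Tsp n M y := by
  rw [Tsp, Tsp, tangentCone_smooth_eq hM hf hy]

lemma Tsp_mono {M M' : Set (Efd n)} (h : M ⊆ M') (y : Efd n) : Tsp n M y ≤ Tsp n M' y :=
  Submodule.span_mono (tangentConeAt_mono h)

lemma ChartData.image_inter_open {U M : Set (Efd n)} (C : ChartData n U M)
    {O : Set (Efd n)} (hO : IsOpen O) : IsOpen (C.ψ '' (C.V ∩ O)) := by
  have heq : C.ψ '' (C.V ∩ O) = (C.ψ '' C.V) ∩ (C.ψi ⁻¹' (C.V ∩ O)) := by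
    ext p
    constructor
    · rintro ⟨a, haVO, rfl⟩
      exact ⟨Set.mem_image_of_mem _ haVO.1, by rw [Set.mem_preimage, C.hinv a haVO.1]; exact haVO⟩
    · rintro ⟨⟨a, haV, rfl⟩, hpre⟩
      rw [Set.mem_preimage, C.hinv a haV] at hpre
      exact Set.mem_image_of_mem _ hpre
  rw [heq]
  exact C.hψi.continuousOn.isOpen_inter_preimage C.hψV (C.hV.inter hO)

lemma eventually_const_of_crit {U M : Set (Efd n)} (hM : IsCxSubmanifold n U M)
    {f : Efd n → ℂ} (hf : AnalyticOnNhd ℂ f U) {z : Efd n} (hz : z ∈ M)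
    {O : Set (Efd n)} (hO : IsOpen O) (hzO : z ∈ O)
    (hcrit : M ∩ O ⊆ critSet n f M) :
    ∀ᶠ z' in 𝓝[M] z, f z' = f z := by
  obtain ⟨C, hzV⟩ := hM.chart hz
  set S : Set C.W := Subtype.val ⁻¹' (C.ψ '' (C.V ∩ O)) with hS
  have hSopen : IsOpen S := (C.image_inter_open hO).preimage continuous_subtype_val
  set G : C.W → ℂ := fun w => f (C.ψi ↑w) with hG
  -- the derivative of G vanishes on S
  have hG0 : ∀ w ∈ S, HasFDerivAt (𝕜 := ℂ) G 0 w := by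
    intro w hwS
    obtain ⟨b, hbVO, hpb⟩ := hwS
    have hbM : b ∈ M := (C.hMW b hbVO.1).mpr (by rw [hpb]; exact w.2)
    have hbc : b ∈ critSet n f M := hcrit ⟨hbM, hbVO.2⟩
    have hd1 : HasFDerivAt (f ∘ C.ψi) ((fderiv ℂ f b).comp (C.B b)) (↑w : Efd n) := by
      have hψid : HasFDerivAt C.ψi (C.B b) (↑w : Efd n) := by
        rw [← hpb]
        exact (C.diffψi (C.psi_mem hbVO.1)).hasFDerivAt
      have hψib : C.ψi (↑w : Efd n) = b := by rw [← hpb]; exact C.hinv b hbVO.1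
      have hfd : HasFDerivAt f (fderiv ℂ f b) (C.ψi (↑w : Efd n)) := by
        rw [hψib]
        exact (hf b (C.hVU hbVO.1)).differentiableAt.hasFDerivAt
      exact hfd.comp _ hψid
    have hd2 : HasFDerivAt G (((fderiv ℂ f b).comp (C.B b)).comp C.W.subtypeL) w :=
      hd1.comp w C.W.subtypeL.hasFDerivAt
    have hzero : ((fderiv ℂ f b).comp (C.B b)).comp C.W.subtypeL = 0 := by
      ext u
      have h1 : C.B b ↑u ∈ Tsp n M b := C.B_mem_Tsp hbVO.1 hbM u.2
      simpa using hbc.2 (C.B b ↑u) h1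
    rw [hzero] at hd2
    exact hd2
  -- constancy on a ball around the image of z
  have hψzW : C.ψ z ∈ C.W := (C.hMW z hzV).mp hz
  set wz : C.W := ⟨C.ψ z, hψzW⟩ with hwz
  have hwzS : wz ∈ S := ⟨z, ⟨hzV, hzO⟩, rfl⟩
  obtain ⟨r, hr, hball⟩ := Metric.isOpen_iff.mp hSopen wz hwzS
  have hconst : ∀ w ∈ ball wz r, G w = G wz := by
    intro w hw
    have hb := Convex.norm_image_sub_le_of_norm_hasFDerivWithin_le
      (f := G) (f' := fun _ => (0 : C.W →L[ℂ] ℂ)) (C := 0)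
      (fun u hu => (hG0 u (hball hu)).hasFDerivWithinAt)
      (fun u _ => by simp) (convex_ball wz r) (mem_ball_self hr) hw
    have : ‖G w - G wz‖ ≤ 0 := by simpa using hb
    have h0 : G w - G wz = 0 := by
      have := norm_le_zero_iff.mp this
      exact this
    exact sub_eq_zero.mp h0
  -- pull back to M
  set Ω : Set (Efd n) := (C.V ∩ O) ∩ C.ψ ⁻¹' (ball (C.ψ z) r) with hΩ
  have hΩopen : IsOpen Ω :=
    ((C.hψ.continuousOn).mono Set.inter_subset_left).isOpen_inter_preimage
      (C.hV.inter hO) isOpen_ball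
  have hzΩ : z ∈ Ω := ⟨⟨hzV, hzO⟩, by simp [mem_ball_self hr]⟩
  filter_upwards [mem_nhdsWithin_of_mem_nhds (hΩopen.mem_nhds hzΩ), self_mem_nhdsWithin]
    with z' hz'Ω hz'M
  have hz'V : z' ∈ C.V := hz'Ω.1.1
  have hψz'W : C.ψ z' ∈ C.W := (C.hMW z' hz'V).mp hz'M
  have hwmem : (⟨C.ψ z', hψz'W⟩ : C.W) ∈ ball wz r := by
    have : dist (C.ψ z') (C.ψ z) < r := hz'Ω.2
    simpa [mem_ball, Subtype.dist_eq] using this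
  have := hconst _ hwmem
  simpa [hG, hwz, C.hinv z' hz'V, C.hinv z hzV] using this

/-- The set of points of `M` near which `f` is locally constant with value `c`. -/
def lcSet (n : ℕ) (f : Efd n → ℂ) (M : Set (Efd n)) (c : ℂ) : Set (Efd n) :=
  {z ∈ M | ∀ᶠ z' in 𝓝[M] z, f z' = c}

lemma lcSet_closed_in {U M : Set (Efd n)} (hM : IsCxSubmanifold n U M)
    {f : Efd n → ℂ} (hf : AnalyticOnNhd ℂ f U) {c : ℂ} {z : Efd n} (hzM : z ∈ M)
    (hcl : z ∈ closure (lcSet n f M c)) : z ∈ lcSet n f M c := by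
  obtain ⟨C, hzV⟩ := hM.chart hzM
  set S : Set C.W := Subtype.val ⁻¹' (C.ψ '' C.V) with hSdef
  have hSopen : IsOpen S := C.hψV.preimage continuous_subtype_val
  set G : C.W → ℂ := fun w => f (C.ψi ↑w) with hG
  have hGanal : AnalyticOnNhd ℂ G S := by
    intro w hw
    have h1 : AnalyticAt ℂ (fun u : C.W => (↑u : Efd n)) w := C.W.subtypeL.analyticAt w
    have h2 : AnalyticAt ℂ C.ψi (↑w : Efd n) := C.hψi _ hw
    have h3 : AnalyticAt ℂ f (C.ψi ↑w) := hf _ (C.hVU (C.psii_mem hw))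
    exact (h3.comp h2).comp h1
  have hψzW : C.ψ z ∈ C.W := (C.hMW z hzV).mp hzM
  set wz : C.W := ⟨C.ψ z, hψzW⟩ with hwz
  have hwzS : wz ∈ S := ⟨z, hzV, rfl⟩
  obtain ⟨r, hr, hball⟩ := Metric.isOpen_iff.mp hSopen wz hwzS
  -- find a point of `lcSet` in the chart close to `z`
  set N : Set (Efd n) := C.V ∩ C.ψ ⁻¹' (ball (C.ψ z) r) with hN
  have hNopen : IsOpen N :=
    C.hψ.continuousOn.isOpen_inter_preimage C.hV isOpen_ball
  have hzN : z ∈ N := ⟨hzV, by simp [mem_ball_self hr]⟩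
  obtain ⟨a, ⟨haV, haball⟩, haA⟩ := _root_.mem_closure_iff.mp hcl N hNopen hzN
  have haM : a ∈ M := haA.1
  have hψaW : C.ψ a ∈ C.W := (C.hMW a haV).mp haM
  set wa : C.W := ⟨C.ψ a, hψaW⟩ with hwa
  have hwa_ball : wa ∈ ball wz r := by
    have : dist (C.ψ a) (C.ψ z) < r := haball
    simpa [mem_ball, Subtype.dist_eq] using this
  -- G is eventually equal to c near wa
  have hev : G =ᶠ[𝓝 wa] fun _ => c := by
    have h1 : ∀ᶠ z' in 𝓝 a, z' ∈ M → f z' = c := eventually_nhdsWithin_iff.mp haA.2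
    obtain ⟨Oa, hOa1, hOaopen, haOa⟩ := _root_.eventually_nhds_iff.mp h1
    have hSA : IsOpen ((Subtype.val ⁻¹' (C.ψ '' (C.V ∩ Oa))) : Set C.W) :=
      (C.image_inter_open hOaopen).preimage continuous_subtype_val
    have hwaSA : wa ∈ (Subtype.val ⁻¹' (C.ψ '' (C.V ∩ Oa)) : Set C.W) :=
      ⟨a, ⟨haV, haOa⟩, rfl⟩
    filter_upwards [hSA.mem_nhds hwaSA] with u hu
    obtain ⟨b, ⟨hbV, hbOa⟩, hpb⟩ := hu
    have hbM : b ∈ M := (C.hMW b hbV).mpr (by rw [hpb]; exact u.2)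
    have : C.ψi (↑u : Efd n) = b := by rw [← hpb]; exact C.hinv b hbV
    show f (C.ψi ↑u) = c
    rw [this]
    exact hOa1 b hbOa hbM
  -- identity theorem on the ball
  have hEq : Set.EqOn G (fun _ => c) (ball wz r) :=
    AnalyticOnNhd.eqOn_of_preconnected_of_eventuallyEq
      (fun u hu => hGanal u (hball hu)) analyticOnNhd_const
      (convex_ball wz r).isPreconnected hwa_ball hev
  refine ⟨hzM, ?_⟩
  filter_upwards [mem_nhdsWithin_of_mem_nhds (hNopen.mem_nhds hzN), self_mem_nhdsWithin]
    with z' hz'N hz'M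
  have hz'V : z' ∈ C.V := hz'N.1
  have hψz'W : C.ψ z' ∈ C.W := (C.hMW z' hz'V).mp hz'M
  have hwmem : (⟨C.ψ z', hψz'W⟩ : C.W) ∈ ball wz r := by
    have : dist (C.ψ z') (C.ψ z) < r := hz'N.2
    simpa [mem_ball, Subtype.dist_eq] using this
  have := hEq hwmem
  simpa [hG, C.hinv z' hz'V] using this

lemma dense_smooth {U M : Set (Efd n)} (hM : IsCxSubmanifold n U M) {f : Efd n → ℂ}
    (hf : AnalyticOnNhd ℂ f U)
    (hnc : ∀ y ∈ M, ¬∃ c : ℂ, ∀ z ∈ connectedComponentIn M y, f z = c)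
    {y : Efd n} (hy : y ∈ M) : y ∈ closure (M \ critSet n f M) := by
  by_contra hcl
  have hV0 : IsOpen (closure (M \ critSet n f M))ᶜ := isClosed_closure.isOpen_compl
  have hyV0 : y ∈ (closure (M \ critSet n f M))ᶜ := hcl
  have hcrit : M ∩ (closure (M \ critSet n f M))ᶜ ⊆ critSet n f M := by
    rintro z ⟨hzM, hzc⟩
    by_contra h
    exact hzc (subset_closure ⟨hzM, h⟩)
  set c := f y with hc
  set A := lcSet n f M c with hA
  have hyA : y ∈ A := ⟨hy, eventually_const_of_crit hM hf hy hV0 hyV0 hcrit⟩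
  have hAopen : ∀ z ∈ A, ∃ Oz : Set (Efd n), IsOpen Oz ∧ z ∈ Oz ∧ ∀ q ∈ M ∩ Oz, f q = c := by
    intro z hz
    have h1 : ∀ᶠ z' in 𝓝 z, z' ∈ M → f z' = c := eventually_nhdsWithin_iff.mp hz.2
    obtain ⟨Oz, hOz1, hOzopen, hzOz⟩ := _root_.eventually_nhds_iff.mp h1
    exact ⟨Oz, hOzopen, hzOz, fun q hq => hOz1 q hq.2 hq.1⟩
  choose Oz hOzopen hOzmem hOzval using hAopen
  set u := ⋃ (z : Efd n) (hz : z ∈ A), Oz z hz with hu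
  have huopen : IsOpen u := isOpen_iUnion fun z => isOpen_iUnion fun hz => hOzopen z hz
  have hAu : A ⊆ u := fun z hz => Set.mem_iUnion.mpr ⟨z, Set.mem_iUnion.mpr ⟨hz, hOzmem z hz⟩⟩
  have huMA : u ∩ M ⊆ A := by
    rintro p ⟨hpu, hpM⟩
    obtain ⟨z, hz, hpOz⟩ : ∃ z, ∃ hz : z ∈ A, p ∈ Oz z hz := by
      simpa [hu, Set.mem_iUnion] using hpu
    refine ⟨hpM, ?_⟩
    filter_upwards [mem_nhdsWithin_of_mem_nhds ((hOzopen z hz).mem_nhds hpOz),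
      self_mem_nhdsWithin] with q hqO hqM
    exact hOzval z hz q ⟨hqM, hqO⟩
  set comp := connectedComponentIn M y with hcomp
  have hcompM : comp ⊆ M := connectedComponentIn_subset M y
  have hycomp : y ∈ comp := mem_connectedComponentIn hy
  have hpc : IsPreconnected comp := isPreconnected_connectedComponentIn
  have hsub : comp ⊆ u ∪ (closure A)ᶜ := by
    intro p hp
    by_cases hpc2 : p ∈ closure A
    · exact Or.inl (hAu (lcSet_closed_in hM hf (hcompM hp) hpc2))
    · exact Or.inr hpc2
  have hdisj : comp ∩ (u ∩ (closure A)ᶜ) = ∅ := by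
    ext p
    simp only [Set.mem_inter_iff, Set.mem_empty_iff_false, iff_false, not_and]
    intro hp hpu hpn
    exact hpn (subset_closure (huMA ⟨hpu, hcompM hp⟩))
  have hne : (comp ∩ u).Nonempty := ⟨y, hycomp, hAu hyA⟩
  have hcompA : comp ⊆ A := by
    intro p hp
    have hpcl : p ∈ closure A := by
      by_contra hpn
      have hcontr := hpc u (closure A)ᶜ huopen isClosed_closure.isOpen_compl hsub hne
        ⟨p, hp, hpn⟩
      rw [hdisj] at hcontr
      exact Set.not_nonempty_empty hcontr
    exact lcSet_closed_in hM hf (hcompM hp) hpcl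
  exact hnc y hy ⟨c, fun p hp => (hcompA hp).2.self_of_nhdsWithin (hcompM hp)⟩

lemma closure_relConormal_smooth_eq {U M : Set (Efd n)}
    (hM : IsCxSubmanifold n U M) {f : Efd n → ℂ} (hf : AnalyticOnNhd ℂ f U)
    (hnc : ∀ y ∈ M, ¬∃ c : ℂ, ∀ z ∈ connectedComponentIn M y, f z = c) :
    closure (relConormalSet n f (M \ critSet n f M)) = closure (relConormalSet n f M) := by
  apply Set.Subset.antisymm
  · apply closure_mono
    rintro ⟨y, η⟩ ⟨hyM, hη⟩
    refine ⟨hyM.1, fun v hv hdv => ?_⟩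
    rw [← Tsp_smooth_eq hM hf hyM] at hv
    exact hη v hv hdv
  · apply closure_minimal _ isClosed_closure
    rintro ⟨y, η⟩ ⟨hyM, hη⟩
    by_cases hyc : y ∈ critSet n f M
    · -- over the critical set: approximate by conormal covectors over the smooth part
      have hηT : ∀ v ∈ Tsp n M y, η v = 0 := fun v hv => hη v hv (hyc.2 v hv)
      obtain ⟨C, hyV⟩ := hM.chart hyM
      set Φ : Efd n → (Efd n × (Efd n →L[ℂ] ℂ)) :=
        fun z => (z, η.comp ((C.B y).comp (C.A z))) with hΦ
      set s : Set (Efd n) := (M \ critSet n f M) ∩ C.V with hs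
      have hclY : y ∈ closure s := by
        have hd := mem_closure_iff_nhds.mp (dense_smooth hM hf hnc hyM)
        rw [mem_closure_iff_nhds]
        intro t ht
        obtain ⟨p, ⟨hpt, hpV⟩, hpMs⟩ := hd (t ∩ C.V) (Filter.inter_mem ht (C.hV.mem_nhds hyV))
        exact ⟨p, hpt, hpMs, hpV⟩
      have hΦcont : ContinuousOn Φ C.V :=
        continuousOn_id.prodMk (continuousOn_const.clm_comp (continuousOn_const.clm_comp C.contA))
      have hΦmem : ∀ z ∈ s, Φ z ∈ relConormalSet n f (M \ critSet n f M) := by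
        rintro z ⟨hzMs, hzV⟩
        refine ⟨hzMs, fun v hv _ => ?_⟩
        have hv' : v ∈ Tsp n M z := Tsp_mono Set.diff_subset z hv
        obtain ⟨w, hwW, rfl⟩ := C.exists_of_mem_Tsp hzV hzMs.1 hv'
        show η ((C.B y) (C.A z (C.B z w))) = 0
        rw [C.AB_apply hzV w]
        exact hηT _ (C.B_mem_Tsp hyV hyM hwW)
      have h1 : ContinuousWithinAt Φ s y :=
        (hΦcont.continuousWithinAt hyV).mono Set.inter_subset_right
      have h2 : Φ y ∈ closure (Φ '' s) := h1.mem_closure_image hclY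
      have hΦy : Φ y = (y, η) := by
        simp only [hΦ, Prod.mk.injEq, true_and]
        rw [C.B_comp_A hyV, ContinuousLinearMap.comp_id]
      rw [hΦy] at h2
      refine closure_mono ?_ h2
      rintro p ⟨z, hz, rfl⟩
      exact hΦmem z hz
    · exact subset_closure
        ⟨⟨hyM, hyc⟩, fun v hv hdv => hη v (Tsp_mono Set.diff_subset y hv) hdv⟩

end Aux

/-- Remark 4.2: let `M ⊆ U` be a complex submanifold such that `f̃` is not
constant on any connected component of `M`, let `Σ(f̃|_M)` be the critical set of `f̃|_M` and
`M̊ := M ∖ Σ(f̃|_M)`.  Then `closure(T*_{f̃|_M̊} U) = closure(T*_{f̃|_M} U)`; consequently,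
for any complex submanifold `N ⊆ U` on which `d(f̃|_N) ≡ 0` and any `x ∈ N`, the pair
`(M, N)` satisfies Thom's `a_f` condition at `x` iff `(M̊, N)` does. -/
theorem closure_relConormal_eq_of_nonconstant (n : ℕ) (U : Set (Fin (n + 1) → ℂ))
    (hU : IsOpen U) (f : (Fin (n + 1) → ℂ) → ℂ) (hf : AnalyticOnNhd ℂ f U)
    (M : Set (Fin (n + 1) → ℂ)) (hM : IsCxSubmanifold n U M)
    (hnc : ∀ y ∈ M, ¬∃ c : ℂ, ∀ z ∈ connectedComponentIn M y, f z = c) :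
    closure (relConormalSet n f (M \ {y ∈ M | ∀ v ∈ Tsp n M y, fderiv ℂ f y v = 0})) =
        closure (relConormalSet n f M) ∧
      ∀ N : Set (Fin (n + 1) → ℂ), IsCxSubmanifold n U N →
        (∀ y ∈ N, ∀ v ∈ Tsp n N y, fderiv ℂ f y v = 0) → ∀ x ∈ N,
        (ThomAf n f M N x ↔
          ThomAf n f (M \ {y ∈ M | ∀ v ∈ Tsp n M y, fderiv ℂ f y v = 0}) N x) := by
  have hkey : closure (relConormalSet n f
      (M \ {y ∈ M | ∀ v ∈ Tsp n M y, fderiv ℂ f y v = 0})) =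
      closure (relConormalSet n f M) :=
    closure_relConormal_smooth_eq hM hf hnc
  refine ⟨hkey, fun N _ _ x _ => ?_⟩
  constructor
  · intro h η hη v hv
    exact h η (by rw [hkey] at hη; exact hη) v hv
  · intro h η hη v hv
    exact h η (by rw [← hkey] at hη; exact hη) v hv
end
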